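/- Let 𝒜 ∈ ℂ^{2n×2n} and ℬ ∈ ℂ^{2n×2m} satisfy 𝒜 + 𝒜♭ + ℬ ℬ♭ = 0. Let n₂ be a nonnegative integer, Z ∈ ℂ^{n×n₂} a matrix, and T := [Z 0; 0 conj(Z)] ∈ ℂ^{2n×2n₂}. If Tᴴ ℬ = 0, then the reduced matrix 𝒜' := Tᴴ 𝒜 T satisfies 𝒜' + (𝒜')♭ = 0, where the ♭-adjoint of 𝒜' is taken with respect to J_{n₂}; that is, the uncontrollable/unobservable subsystem is a (closed) linear quantum system in its own right. -/

import Mathlib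

open Matrix

noncomputable section

/-- `J_k = [I 0; 0 -I]` acting on `ℂ^{2k} = ℂ^k ⊕ ℂ^k`. -/
def Jmat (k : ℕ) : Matrix (Fin k ⊕ Fin k) (Fin k ⊕ Fin k) ℂ :=
  Matrix.fromBlocks 1 0 0 (-1)

/-- Entrywise complex conjugation of a matrix. -/
def mconj {α β : Type} (M : Matrix α β ℂ) : Matrix α β ℂ :=
  M.map (starRingEnd ℂ)

/-- The doubled-up matrix `Δ(U,V) = [U V; conj V  conj U]`. -/
def doubledUp {k r : ℕ} (U V : Matrix (Fin k) (Fin r) ℂ) :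
    Matrix (Fin k ⊕ Fin k) (Fin r ⊕ Fin r) ℂ :=
  Matrix.fromBlocks U V (mconj V) (mconj U)

/-- The ♭-adjoint `X♭ = J_r Xᴴ J_k` of `X ∈ ℂ^{2k×2r}`. -/
def flat {k r : ℕ} (X : Matrix (Fin k ⊕ Fin k) (Fin r ⊕ Fin r) ℂ) :
    Matrix (Fin r ⊕ Fin r) (Fin k ⊕ Fin k) ℂ :=
  Jmat r * Xᴴ * Jmat k

/-- Orthogonal complement of a subspace of `ℂ^ι` w.r.t. the standard Hermitian
inner product `⟪y, x⟫ = (star y) ⬝ᵥ x`. -/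
def orthComp {ι : Type} [Fintype ι] (S : Submodule ℂ (ι → ℂ)) : Submodule ℂ (ι → ℂ) where
  carrier := {x | ∀ y ∈ S, star y ⬝ᵥ x = 0}
  add_mem' := by
    intro a b ha hb y hy
    simp only [Set.mem_setOf_eq] at *
    rw [dotProduct_add, ha y hy, hb y hy, add_zero]
  zero_mem' := by
    intro y hy
    simp
  smul_mem' := by
    intro c x hx y hy
    simp only [Set.mem_setOf_eq] at *
    rw [dotProduct_smul, hx y hy, smul_zero]

/-- The controllable subspace `Im(C_G) = ∑_{k<2n} Im(𝒜ᵏℬ)`. -/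
def ctrbSub (n m : ℕ) (𝒜 : Matrix (Fin n ⊕ Fin n) (Fin n ⊕ Fin n) ℂ)
    (ℬ : Matrix (Fin n ⊕ Fin n) (Fin m ⊕ Fin m) ℂ) : Submodule ℂ (Fin n ⊕ Fin n → ℂ) :=
  ⨆ k ∈ Finset.range (2 * n), LinearMap.range ((𝒜 ^ k * ℬ).mulVecLin)

/-- The unobservable subspace `Ker(O_G) = ⋂_{k<2n} Ker(𝒞𝒜ᵏ)`. -/
def unobsSub (n m : ℕ) (𝒜 : Matrix (Fin n ⊕ Fin n) (Fin n ⊕ Fin n) ℂ)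
    (𝒞 : Matrix (Fin m ⊕ Fin m) (Fin n ⊕ Fin n) ℂ) : Submodule ℂ (Fin n ⊕ Fin n → ℂ) :=
  ⨅ k ∈ Finset.range (2 * n), LinearMap.ker ((𝒞 * 𝒜 ^ k).mulVecLin)

/-! Since `J² = 1`, `♭` reverses products; a block-diagonal `T` intertwines `J_n` and `J_{n₂}`,
so `T♭ = Tᴴ` and `(Tᴴ𝒜T)♭ = Tᴴ𝒜♭T`. Hence `𝒜' + 𝒜'♭ = Tᴴ(𝒜 + 𝒜♭)T = -(Tᴴℬ)(ℬ♭T) = 0`. -/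

lemma conjTranspose_Jmat (k : ℕ) : (Jmat k)ᴴ = Jmat k := by
  simp [Jmat, fromBlocks_conjTranspose]

lemma Jmat_mul_self (k : ℕ) : Jmat k * Jmat k = 1 := by
  simp [Jmat, fromBlocks_multiply, ← fromBlocks_one]

lemma Jmat_mul_Jmat_mul {k : ℕ} {ι : Type*} (X : Matrix (Fin k ⊕ Fin k) ι ℂ) :
    Jmat k * (Jmat k * X) = X := by
  rw [← Matrix.mul_assoc, Jmat_mul_self, Matrix.one_mul]

lemma flat_mul {k r s : ℕ} (X : Matrix (Fin k ⊕ Fin k) (Fin r ⊕ Fin r) ℂ)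
    (Y : Matrix (Fin r ⊕ Fin r) (Fin s ⊕ Fin s) ℂ) : flat (X * Y) = flat Y * flat X := by
  simp only [flat, conjTranspose_mul, Matrix.mul_assoc, Jmat_mul_Jmat_mul]

lemma Jmat_mul_fromBlocks_diagonal {k r : ℕ} (U V : Matrix (Fin k) (Fin r) ℂ) :
    Jmat k * fromBlocks U 0 0 V = fromBlocks U 0 0 V * Jmat r := by
  simp [Jmat, fromBlocks_multiply]

section CommuteJmat

variable {k r : ℕ} {T : Matrix (Fin k ⊕ Fin k) (Fin r ⊕ Fin r) ℂ}

lemma flat_eq_conjTranspose (hT : Jmat k * T = T * Jmat r) : flat T = Tᴴ := by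
  have hTH : Tᴴ * Jmat k = Jmat r * Tᴴ := by
    simpa [conjTranspose_mul, conjTranspose_Jmat] using congr_arg conjTranspose hT
  rw [flat, Matrix.mul_assoc, hTH, Jmat_mul_Jmat_mul]

lemma flat_conjTranspose (hT : Jmat k * T = T * Jmat r) : flat Tᴴ = T := by
  rw [flat, conjTranspose_conjTranspose, hT, Matrix.mul_assoc, Jmat_mul_self, Matrix.mul_one]

lemma flat_conjTranspose_mul_mul (hT : Jmat k * T = T * Jmat r)
    (A : Matrix (Fin k ⊕ Fin k) (Fin k ⊕ Fin k) ℂ) :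
    flat (Tᴴ * A * T) = Tᴴ * flat A * T := by
  rw [flat_mul, flat_mul, flat_eq_conjTranspose hT, flat_conjTranspose hT, Matrix.mul_assoc]

end CommuteJmat

theorem reduced_closed_system_general
    (n m n₂ : ℕ)
    (𝒜 : Matrix (Fin n ⊕ Fin n) (Fin n ⊕ Fin n) ℂ)
    (ℬ : Matrix (Fin n ⊕ Fin n) (Fin m ⊕ Fin m) ℂ)
    (hPR : 𝒜 + flat 𝒜 + ℬ * flat ℬ = 0)
    (Z : Matrix (Fin n) (Fin n₂) ℂ)
    (T : Matrix (Fin n ⊕ Fin n) (Fin n₂ ⊕ Fin n₂) ℂ)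
    (hT : T = Matrix.fromBlocks Z 0 0 (mconj Z))
    (hTB : Tᴴ * ℬ = 0) :
    Tᴴ * 𝒜 * T + flat (Tᴴ * 𝒜 * T) = 0 := by
  have hJT : Jmat n * T = T * Jmat n₂ := hT ▸ Jmat_mul_fromBlocks_diagonal Z (mconj Z)
  have h𝒜 : 𝒜 + flat 𝒜 = -(ℬ * flat ℬ) := eq_neg_of_add_eq_zero_left hPR
  calc Tᴴ * 𝒜 * T + flat (Tᴴ * 𝒜 * T) = Tᴴ * (𝒜 + flat 𝒜) * T := by
        rw [flat_conjTranspose_mul_mul hJT, Matrix.mul_add, Matrix.add_mul]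
    _ = -(Tᴴ * ℬ * (flat ℬ * T)) := by
        rw [h𝒜, Matrix.mul_neg, Matrix.neg_mul, Matrix.mul_assoc, Matrix.mul_assoc,
          Matrix.mul_assoc]
    _ = 0 := by rw [hTB, Matrix.zero_mul, neg_zero]

/-- **The `c̄ō` subsystem is a closed quantum system (Remark 2).** If
`𝒜 + 𝒜♭ + ℬℬ♭ = 0`, `T = [Z 0; 0 conj Z]` and `Tᴴℬ = 0`, then the reduced matrix
`𝒜' = Tᴴ𝒜T` satisfies `𝒜' + (𝒜')♭ = 0`. -/
theorem reduced_closed_system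
    (n m n₂ : ℕ) (hn : 0 < n) (hm : 0 < m)
    (𝒜 : Matrix (Fin n ⊕ Fin n) (Fin n ⊕ Fin n) ℂ)
    (ℬ : Matrix (Fin n ⊕ Fin n) (Fin m ⊕ Fin m) ℂ)
    (hPR : 𝒜 + flat 𝒜 + ℬ * flat ℬ = 0)
    (Z : Matrix (Fin n) (Fin n₂) ℂ)
    (T : Matrix (Fin n ⊕ Fin n) (Fin n₂ ⊕ Fin n₂) ℂ)
    (hT : T = Matrix.fromBlocks Z 0 0 (mconj Z))
    (hTB : Tᴴ * ℬ = 0) :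
    Tᴴ * 𝒜 * T + flat (Tᴴ * 𝒜 * T) = 0 :=
  reduced_closed_system_general n m n₂ 𝒜 ℬ hPR Z T hT hTB

end
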